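/- For all n ≥ 1, 2·Σ_{i=1}^n i·P_i = (n-1)·P_{n+1} + n·P_n + 1, where P_n is the n-th Pell number. -/
import Mathlib


def pell : ℕ → ℤ
  | 0 => 0
  | 1 => 1
  | n + 2 => 2 * pell (n + 1) + pell n

theorem stmt15 (n : ℕ) (hn : 1 ≤ n) :
    2 * (∑ i ∈ Finset.Icc 1 n, (i : ℤ) * pell i) =
      ((n : ℤ) - 1) * pell (n + 1) + (n : ℤ) * pell n + 1 := by
  induction n with
  | zero => omega
  | succ m ih =>
    rcases hn.eq_or_lt with h | h
    · simp [← h, pell]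
    · have hm : 1 ≤ m := by omega
      rw [Finset.sum_Icc_succ_top (by omega : 1 ≤ m + 1), mul_add, ih hm]
      have : pell (m + 2) = 2 * pell (m + 1) + pell m := rfl
      push_cast
      rw [this]
      ring
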